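/- arXiv:2301.01137 — 4 statements merged into one kernel-verified Lean document; each statement's English description precedes it below -/
import Mathlib

section
/- Zykov's theorem: for integers 2 ≤ s < t and n ≥ 1, the maximum number of copies of K_s in an n-vertex K_t-free graph is attained by the Turán graph T(n, t-1); in particular ex(n, K_s, K_t) = N(K_s, T(n, t-1)). -/
/-!
Induction on the clique size and on the number of vertices. A `K_{r+1}`-free graph on `n + 1` vertices has a
vertex `v` of degree at most `n - ⌊n / r⌋`: otherwise every vertex misses at most `⌊n / r⌋` others,
and a clique can be grown greedily up to `r + 1` vertices. The `(k+1)`-cliques of `G` are those of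
`G - v`, a `K_{r+1}`-free graph on `n` vertices, together with the `k`-cliques of the neighbourhood
of `v`, a `K_r`-free graph on at most `n - ⌊n / r⌋` vertices. In `T(n+1, r)` the vertex `0` lies in
a largest part, so deleting it leaves `T(n, r)` and its neighbourhood contains `T(n - ⌊n / r⌋, r - 1)`;
the same recursion therefore bounds the clique counts of `G` by those of `T(n+1, r)`.
-/

open SimpleGraph

/-- The number of copies of `K_s` (i.e. `s`-cliques) in `G`. -/
noncomputable def cliqueCount {V : Type*} (G : SimpleGraph V) (s : ℕ) : ℕ :=
  Nat.card {t : Finset V // G.IsNClique s t}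

open Finset

lemma Nat.add_div_add_one_mod {x r : ℕ} (hr : 0 < r) :
    (x + x / r + 1) % (r + 1) = x % r + 1 := by
  have hx : x + x / r + 1 = x % r + 1 + (r + 1) * (x / r) := by
    linarith [Nat.div_add_mod x r]
  rw [hx, Nat.add_mul_mod_self_left, Nat.mod_eq_of_lt (by have := Nat.mod_lt x hr; omega)]

namespace SimpleGraph

variable {V W : Type*} {G : SimpleGraph V} {H : SimpleGraph W}

lemma cliqueCount_zero (G : SimpleGraph V) : cliqueCount G 0 = 1 := by
  simp [cliqueCount]

lemma IsContained.cliqueCount_le [Finite W] (h : G ⊑ H) (k : ℕ) :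
    cliqueCount G k ≤ cliqueCount H k := by
  obtain ⟨f⟩ := h
  refine Nat.card_le_card_of_injective (fun t => ⟨t.1.map f.toEmbedding, ?_⟩) fun t u htu => ?_
  · exact t.2.map.mono ((map_le_iff_le_comap _ _ _).2 fun _ _ => f.toHom.map_adj)
  · exact Subtype.ext (Finset.map_injective _ (congrArg Subtype.val htu))

section Finite

variable [Fintype V] [DecidableEq V] [DecidableRel G.Adj]

lemma cliqueCount_eq_card_cliqueFinset (k : ℕ) : cliqueCount G k = #(G.cliqueFinset k) := by
  rw [cliqueCount, Nat.card_eq_fintype_card, Fintype.card_subtype]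
  rfl

lemma cliqueCount_induce (s : Set V) [DecidablePred (· ∈ s)] (k : ℕ) :
    cliqueCount (G.induce s) k = #{t ∈ G.cliqueFinset k | ∀ a ∈ t, a ∈ s} := by
  rw [cliqueCount_eq_card_cliqueFinset,
    ← card_map (mapEmbedding (.subtype (· ∈ s))).toEmbedding]
  congr 1
  ext t
  simp only [mem_map, mem_cliqueFinset_iff, isNClique_induce_iff, mem_filter,
    RelEmbedding.coe_toEmbedding, mapEmbedding_apply]
  constructor
  · rintro ⟨u, hu, rfl⟩
    exact ⟨hu, fun a ha => by obtain ⟨b, -, rfl⟩ := mem_map.1 ha; exact b.2⟩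
  · rintro ⟨ht, hts⟩
    exact ⟨t.subtype (· ∈ s), by rwa [subtype_map_of_mem hts], subtype_map_of_mem hts⟩

lemma card_cliqueFinset_succ_filter_mem (v : V) (k : ℕ) :
    #{t ∈ G.cliqueFinset (k + 1) | v ∈ t} = #{t ∈ G.cliqueFinset k | ∀ a ∈ t, G.Adj v a} := by
  refine card_nbij' (·.erase v) (insert v) (fun t ht => ?_) (fun t ht => ?_) (fun t ht => ?_)
    (fun t ht => ?_)
  all_goals simp only [coe_filter, Set.mem_ofPred_eq, mem_cliqueFinset_iff] at ht ⊢
  · exact ⟨ht.1.erase_of_mem ht.2,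
      fun a ha => ht.1.1 ht.2 (mem_of_mem_erase ha) (ne_of_mem_erase ha).symm⟩
  · exact ⟨ht.1.insert ht.2, mem_insert_self v t⟩
  · exact insert_erase ht.2
  · exact erase_insert fun hv => G.irrefl (ht.2 v hv)

lemma exists_isNClique_of_forall_card_le_degree_add {q : ℕ}
    (hq : ∀ v, Fintype.card V ≤ G.degree v + q) :
    ∀ k, k * q < Fintype.card V → ∃ t, G.IsNClique (k + 1) t
  | 0, h => by
    have : Nonempty V := Fintype.card_pos_iff.1 (by omega)
    exact ⟨{Classical.arbitrary V}, by simp⟩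
  | k + 1, h => by
    obtain ⟨t, ht⟩ := exists_isNClique_of_forall_card_le_degree_add hq k
      (lt_of_le_of_lt (Nat.mul_le_mul_right q k.le_succ) h)
    have hcard : #(t.biUnion fun a => (G.neighborFinset a)ᶜ) < #(univ : Finset V) :=
      calc #(t.biUnion fun a => (G.neighborFinset a)ᶜ)
          ≤ ∑ a ∈ t, #(G.neighborFinset a)ᶜ := card_biUnion_le
        _ ≤ ∑ _a ∈ t, q := sum_le_sum fun a _ => by
          rw [card_compl, card_neighborFinset_eq_degree]
          have := hq a
          omega
        _ = (k + 1) * q := by rw [sum_const, ht.card_eq, smul_eq_mul]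
        _ < #(univ : Finset V) := by rwa [card_univ]
    obtain ⟨w, -, hw⟩ := exists_mem_notMem_of_card_lt_card hcard
    simp only [mem_biUnion, mem_compl, mem_neighborFinset, not_exists, not_and, not_not] at hw
    exact ⟨insert w t, ht.insert fun a ha => (hw a ha).symm⟩

/-- Here `(card V - 1) / r + 1 = ⌈card V / r⌉`. -/
theorem CliqueFree.exists_degree_add_lt [Nonempty V] {r : ℕ} (hG : G.CliqueFree (r + 1)) :
    ∃ v, G.degree v + (Fintype.card V - 1) / r < Fintype.card V := by
  by_contra! h
  have hr : r * ((Fintype.card V - 1) / r) < Fintype.card V :=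
    lt_of_le_of_lt (Nat.mul_div_le _ _) (Nat.sub_lt Fintype.card_pos one_pos)
  obtain ⟨t, ht⟩ := exists_isNClique_of_forall_card_le_degree_add h r hr
  exact hG t ht

end Finite

theorem cliqueCount_succ [Fintype V] (v : V) (k : ℕ) :
    cliqueCount G (k + 1) =
      cliqueCount (G.induce {v}ᶜ) (k + 1) + cliqueCount (G.induce (G.neighborSet v)) k := by
  classical
  rw [cliqueCount_eq_card_cliqueFinset, cliqueCount_induce, cliqueCount_induce,
    ← card_filter_add_card_filter_not (p := (v ∉ ·))]
  simp only [Set.mem_compl_iff, Set.mem_singleton_iff, mem_neighborSet, not_not,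
    ← card_cliqueFinset_succ_filter_mem]
  congr 2
  exact filter_congr fun t _ => ⟨fun h a ha hav => h (hav ▸ ha), fun h hv => h v hv rfl⟩

lemma CliqueFree.induce_neighborSet {n : ℕ} (hG : G.CliqueFree (n + 1)) (v : V) :
    (G.induce (G.neighborSet v)).CliqueFree n :=
  (cliqueFree_induce_iff _ _ _).2 <| by
    simpa using (G.cliqueFreeOn_univ.2 hG).of_succ _ (Set.mem_univ v)

lemma isContained_turanGraph_of_card_le [Fintype V] {r : ℕ} (h : Fintype.card V ≤ r) :
    G ⊑ turanGraph (Fintype.card V) r := by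
  rw [turanGraph_eq_top.2 (Or.inr h)]
  exact isContained_top_iff.2 ⟨(Fintype.equivFin V).toEmbedding⟩

lemma turanGraph_isContained_turanGraph {m n : ℕ} (h : m ≤ n) (r : ℕ) :
    turanGraph m r ⊑ turanGraph n r :=
  ⟨⟨⟨Fin.castLE h, id⟩, Fin.castLE_injective h⟩⟩

lemma turanGraph_isContained_induce_compl_zero (n r : ℕ) :
    turanGraph n r ⊑ (turanGraph (n + 1) r).induce {0}ᶜ :=
  ⟨⟨⟨fun x => ⟨x.succ, Fin.succ_ne_zero x⟩, fun h h' => h (Nat.ModEq.add_right_cancel' 1 h')⟩,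
    fun _ _ hxy => Fin.succ_injective _ (congrArg Subtype.val hxy)⟩⟩

/-- The copy is `x ↦ x + x / r + 1 = (x / r) * (r + 1) + (x % r + 1)`: it sends the part of residue
`i` of `T(m, r)` into the part of residue `i + 1` of `T(n + 1, r + 1)`, avoiding the part of `0`. -/
lemma turanGraph_isContained_induce_neighborSet_zero (n r : ℕ) :
    turanGraph (n - n / (r + 1)) r ⊑
      (turanGraph (n + 1) (r + 1)).induce ((turanGraph (n + 1) (r + 1)).neighborSet 0) := by
  rcases r.eq_zero_or_pos with rfl | hr
  · rw [Nat.div_one, Nat.sub_self]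
    exact .of_isEmpty
  have hf : StrictMono fun x : ℕ => x + x / r + 1 := fun x y hxy => by
    have := Nat.div_le_div_right (c := r) hxy.le
    dsimp only
    omega
  have hlt (x : Fin (n - n / (r + 1))) : x + x / r + 1 < n + 1 := by
    have hn : n - n / (r + 1) = r * (n / (r + 1)) + n % (r + 1) := by
      have := Nat.div_add_mod n (r + 1)
      have : (r + 1) * (n / (r + 1)) = r * (n / (r + 1)) + n / (r + 1) := by ring
      omega
    have hx : x / r < n / (r + 1) + 1 := by
      rw [Nat.div_lt_iff_lt_mul hr, add_mul, one_mul, mul_comm]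
      have := Nat.mod_lt n (Nat.add_one_pos r)
      have := x.2
      omega
    omega
  refine ⟨⟨⟨fun x => ⟨⟨x + x / r + 1, hlt x⟩, ?_⟩, fun {x y} hxy => ?_⟩, fun x y hxy => ?_⟩⟩
  · show (0 : ℕ) % (r + 1) ≠ (x + x / r + 1) % (r + 1)
    rw [Nat.add_div_add_one_mod hr, Nat.zero_mod]
    omega
  · show (x + x / r + 1) % (r + 1) ≠ (y + y / r + 1) % (r + 1)
    rw [Nat.add_div_add_one_mod hr, Nat.add_div_add_one_mod hr]
    exact fun h => hxy (Nat.succ_injective h)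
  · exact Fin.ext (hf.injective (congrArg (fun v => v.1.1) hxy))

lemma cliqueCount_turanGraph_add_le (n r k : ℕ) :
    cliqueCount (turanGraph n (r + 1)) (k + 1) + cliqueCount (turanGraph (n - n / (r + 1)) r) k ≤
      cliqueCount (turanGraph (n + 1) (r + 1)) (k + 1) := by
  rw [cliqueCount_succ (0 : Fin (n + 1))]
  exact add_le_add ((turanGraph_isContained_induce_compl_zero n (r + 1)).cliqueCount_le _)
    ((turanGraph_isContained_induce_neighborSet_zero n r).cliqueCount_le _)

theorem CliqueFree.cliqueCount_le_cliqueCount_turanGraph [Fintype V] {r : ℕ}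
    (hG : G.CliqueFree (r + 1)) (k : ℕ) :
    cliqueCount G k ≤ cliqueCount (turanGraph (Fintype.card V) r) k := by
  induction k generalizing V r with
  | zero => rw [cliqueCount_zero, cliqueCount_zero]
  | succ k ihk =>
    induction h : Fintype.card V using Nat.strong_induction_on generalizing V with
    | _ N ihN =>
    subst h
    by_cases hVr : Fintype.card V ≤ r
    · exact (isContained_turanGraph_of_card_le hVr).cliqueCount_le _
    obtain ⟨n, hn⟩ : ∃ n, Fintype.card V = n + 1 := Nat.exists_eq_succ_of_ne_zero (by omega)
    have : Nonempty V := Fintype.card_pos_iff.1 (by omega)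
    obtain ⟨r, rfl⟩ : ∃ r', r = r' + 1 := Nat.exists_eq_succ_of_ne_zero fun hr => by
      subst hr
      exact not_isEmpty_of_nonempty V (cliqueFree_one.1 hG)
    classical
    obtain ⟨v, hv⟩ := hG.exists_degree_add_lt
    rw [hn, Nat.add_sub_cancel] at hv
    have hdel : Fintype.card ↥({v}ᶜ : Set V) = n := by simp [filter_ne', hn]
    have hnbhd : Fintype.card (G.neighborSet v) ≤ n - n / (r + 1) := by
      rw [card_neighborSet_eq_degree]
      omega
    rw [hn]
    calc cliqueCount G (k + 1)
        = cliqueCount (G.induce {v}ᶜ) (k + 1) + cliqueCount (G.induce (G.neighborSet v)) k :=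
          cliqueCount_succ v k
      _ ≤ cliqueCount (turanGraph n (r + 1)) (k + 1) +
            cliqueCount (turanGraph (n - n / (r + 1)) r) k := by
        gcongr
        · exact hdel ▸ ihN n (by omega) (hG.comap (Embedding.induce _).isContained) hdel
        · exact (ihk (hG.induce_neighborSet v)).trans
            ((turanGraph_isContained_turanGraph hnbhd r).cliqueCount_le k)
      _ ≤ cliqueCount (turanGraph (n + 1) (r + 1)) (k + 1) := cliqueCount_turanGraph_add_le n r k

end SimpleGraph

theorem stmt_6_general (s t n : ℕ) (hs : 2 ≤ s) (hst : s < t) :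
    IsGreatest {m | ∃ G : SimpleGraph (Fin n), G.CliqueFree t ∧ m = cliqueCount G s}
      (cliqueCount (turanGraph n (t - 1)) s) := by
  obtain ⟨r, rfl⟩ : ∃ r, t = r + 1 := ⟨t - 1, by omega⟩
  rw [Nat.add_sub_cancel]
  refine ⟨⟨_, turanGraph_cliqueFree (by omega), rfl⟩, ?_⟩
  rintro _ ⟨G, hG, rfl⟩
  exact (hG.cliqueCount_le_cliqueCount_turanGraph s).trans_eq (by rw [Fintype.card_fin])

/-- Zykov's theorem: for `2 ≤ s < t` and `n ≥ 1`, among `n`-vertex `K_t`-free graphs the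
Turán graph `T(n, t-1)` has the maximum number of `s`-cliques; in particular
`ex(n, K_s, K_t) = N(K_s, T(n, t-1))`. -/
theorem stmt_6 (s t n : ℕ) (hs : 2 ≤ s) (hst : s < t) (hn : 1 ≤ n) :
    IsGreatest {m | ∃ G : SimpleGraph (Fin n), G.CliqueFree t ∧ m = cliqueCount G s}
      (cliqueCount (turanGraph n (t - 1)) s) :=
  stmt_6_general s t n hs hst
end

section
/- The elementary symmetric polynomial e_k(a_1, …, a_r) with ∑ a_i = n fixed is maximized when the a_i are as equal as possible: if a_1 ≥ a_2 + 2 then replacing (a_1, a_2) by (a_1 − 1, a_2 + 1) does not decrease e_k, and strictly increases it when r ≥ k ≥ 2 and all other a_i ≥ 1. -/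
/-!
Splitting off the two moved variables,
`e_k(x, y, s) = e_k(s) + (x + y) e_{k-1}(s) + x y e_{k-2}(s)`.
Moving one unit from `x + 1` to `y` keeps the sum `x + y + 1` and changes the product from
`(x + 1) y` to `x (y + 1)`, a gain of `x - y`; so `e_k` grows by `(x - y) e_{k-2}(s)`, which is
positive as soon as `x > y` and the remaining variables are positive and at least `k - 2` in number.
-/

def esymmNat {r : ℕ} (a : Fin r → ℕ) (k : ℕ) : ℕ :=
  ∑ S ∈ Finset.univ.powersetCard k, ∏ i ∈ S, a i

namespace Multiset

section CommSemiring

variable {R : Type*} [CommSemiring R]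

@[simp]
theorem esymm_zero (s : Multiset R) : s.esymm 0 = 1 := by
  simp [esymm]

theorem esymm_cons (x : R) (s : Multiset R) (k : ℕ) :
    (x ::ₘ s).esymm (k + 1) = s.esymm (k + 1) + x * s.esymm k := by
  simp [esymm, map_map, sum_map_mul_left]

theorem esymm_cons_cons (x y : R) (s : Multiset R) (k : ℕ) :
    (x ::ₘ y ::ₘ s).esymm (k + 2) =
      s.esymm (k + 2) + (x + y) * s.esymm (k + 1) + x * y * s.esymm k := by
  rw [esymm_cons, esymm_cons, esymm_cons]
  ring

end CommSemiring

theorem esymm_pos {s : Multiset ℕ} (hs : ∀ x ∈ s, 0 < x) {k : ℕ} (hk : k ≤ card s) :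
    0 < s.esymm k := by
  induction s using Multiset.induction_on generalizing k with
  | empty => simp_all
  | cons x s ih =>
    cases k with
    | zero => simp
    | succ k =>
      rw [esymm_cons]
      have hx : 0 < x := hs x (mem_cons_self x s)
      have hsk : 0 < s.esymm k := ih (fun y hy => hs y (mem_cons_of_mem hy)) (by simpa using hk)
      positivity

theorem esymm_balance_le {x y : ℕ} (hxy : y ≤ x) (s : Multiset ℕ) (k : ℕ) :
    ((x + 1) ::ₘ y ::ₘ s).esymm k ≤ (x ::ₘ (y + 1) ::ₘ s).esymm k := by
  match k with
  | 0 => simp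
  | 1 => simp [esymm_cons]; omega
  | k + 2 =>
    rw [esymm_cons_cons, esymm_cons_cons, show x + 1 + y = x + (y + 1) by ring]
    have hprod : (x + 1) * y ≤ x * (y + 1) := by linarith [add_mul x 1 y, mul_add x y 1]
    gcongr

theorem esymm_balance_lt {x y : ℕ} (hxy : y < x) {s : Multiset ℕ} {k : ℕ}
    (hs : 0 < s.esymm k) :
    ((x + 1) ::ₘ y ::ₘ s).esymm (k + 2) < (x ::ₘ (y + 1) ::ₘ s).esymm (k + 2) := by
  rw [esymm_cons_cons, esymm_cons_cons, show x + 1 + y = x + (y + 1) by ring]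
  have hprod : (x + 1) * y < x * (y + 1) := by linarith [add_mul x 1 y, mul_add x y 1]
  gcongr

end Multiset

theorem Finset.map_val_eq_cons_cons {ι α : Type*} [DecidableEq ι] {s : Finset ι} {i j : ι}
    (hi : i ∈ s) (hj : j ∈ s) (hij : i ≠ j) (f : ι → α) :
    s.val.map f = f i ::ₘ f j ::ₘ ((s.erase i).erase j).val.map f := by
  have hj' : j ∈ s.erase i := Finset.mem_erase.2 ⟨hij.symm, hj⟩
  conv_lhs => rw [← Finset.insert_erase hi, ← Finset.insert_erase hj']
  rw [Finset.insert_val_of_notMem (by simp [hij]), Finset.insert_val_of_notMem (by simp)]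
  simp

theorem esymmNat_eq_esymm_map {r : ℕ} (a : Fin r → ℕ) (k : ℕ) :
    esymmNat a k = (Finset.univ.val.map a).esymm k :=
  (Finset.esymm_map_val a _ k).symm

/-- Balancing step: if `a i ≥ a j + 2`, replacing `(a i, a j)` by `(a i − 1, a j + 1)`
does not decrease `e_k`, and strictly increases it when `2 ≤ k ≤ r` and all entries are
positive. -/
theorem stmt_14 {r : ℕ} (a : Fin r → ℕ) (k : ℕ) (i j : Fin r) (hij : i ≠ j)
    (hgap : a j + 2 ≤ a i) :
    esymmNat a k ≤ esymmNat (Function.update (Function.update a i (a i - 1)) j (a j + 1)) k ∧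
    (2 ≤ k → k ≤ r → (∀ l, 1 ≤ a l) →
      esymmNat a k < esymmNat (Function.update (Function.update a i (a i - 1)) j (a j + 1)) k) := by
  set b := Function.update (Function.update a i (a i - 1)) j (a j + 1)
  set rest := (Finset.univ.erase i).erase j
  have hrest : rest.val.map b = rest.val.map a := Multiset.map_congr rfl fun l hl => by
    simp only [rest, Finset.mem_val, Finset.mem_erase] at hl
    simp [b, hl.1, hl.2.1]
  obtain ⟨x, hx⟩ : ∃ x, a i = x + 1 := ⟨a i - 1, by omega⟩
  have hxy : a j < x := by omega
  have ha : esymmNat a k = ((x + 1) ::ₘ a j ::ₘ rest.val.map a).esymm k := by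
    rw [esymmNat_eq_esymm_map,
      Finset.map_val_eq_cons_cons (Finset.mem_univ i) (Finset.mem_univ j) hij, hx]
  have hb : esymmNat b k = (x ::ₘ (a j + 1) ::ₘ rest.val.map a).esymm k := by
    rw [esymmNat_eq_esymm_map,
      Finset.map_val_eq_cons_cons (Finset.mem_univ i) (Finset.mem_univ j) hij, hrest]
    simp [b, hij, hx]
  rw [ha, hb]
  refine ⟨Multiset.esymm_balance_le hxy.le _ _, fun hk hkr hpos => ?_⟩
  obtain ⟨m, rfl⟩ : ∃ m, k = m + 2 := ⟨k - 2, by omega⟩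
  have hcard : rest.card = r - 2 := by
    rw [Finset.card_erase_of_mem (by simp [hij.symm]), Finset.card_erase_of_mem (Finset.mem_univ i),
      Finset.card_univ, Fintype.card_fin]
    omega
  refine Multiset.esymm_balance_lt hxy (Multiset.esymm_pos ?_ ?_)
  · exact Multiset.forall_mem_map_iff.2 fun l _ => hpos l
  · rw [Multiset.card_map, Finset.card_val, hcard]
    omega
end

section
/- Let F be a graph that is the disjoint union of s components each of chromatic number r+1 with a color-critical edge, plus components of chromatic number at most r. Then the graph K_{s-1} + T(n-s+1, r) is F-free for n sufficiently large. -/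
/-!
A copy of `F` in `K_{s-1} + T(n-s+1, r)` restricts, on each of the `s` pieces of chromatic
number `r + 1`, to a copy that cannot lie inside the `r`-colourable Turán part, so every such
piece uses one of the `s - 1` apex vertices. The pieces are disjoint, so they would need `s`
distinct apex vertices.
-/

open SimpleGraph

/-- `G` contains a copy of `F`. -/
def Contains {W V : Type*} (F : SimpleGraph W) (G : SimpleGraph V) : Prop :=
  ∃ f : W ↪ V, ∀ a b, F.Adj a b → G.Adj (f a) (f b)

/-- The join `G + H` of two graphs. -/
def joinGraph {α β : Type*} (G : SimpleGraph α) (H : SimpleGraph β) :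
    SimpleGraph (α ⊕ β) where
  Adj x y := match x, y with
    | .inl a, .inl a' => G.Adj a a'
    | .inr b, .inr b' => H.Adj b b'
    | _, _ => True
  symm := ⟨by rintro (a | b) (a' | b') h <;> simp_all [SimpleGraph.adj_comm]⟩
  loopless := ⟨by rintro (a | b) h <;> simp_all⟩

lemma turanGraph_colorable {n r : ℕ} (hr : 0 < r) : (turanGraph n r).Colorable r :=
  ⟨Coloring.mk (fun v => ⟨v % r, Nat.mod_lt _ hr⟩) fun hadj h =>
    turanGraph_adj.mp hadj (Fin.val_eq_of_eq h)⟩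

section joinGraph

variable {W α β : Type*} {F : SimpleGraph W} {G : SimpleGraph α} {H : SimpleGraph β}

lemma colorable_of_forall_isRight {k : ℕ} (φ : F →g joinGraph G H) (hφ : ∀ w, (φ w).isRight)
    (hH : H.Colorable k) : F.Colorable k := by
  refine hH.of_hom ⟨fun w => (φ w).getRight (hφ w), fun {u w} hadj => ?_⟩
  have h := φ.map_adj hadj
  rwa [← Sum.inr_getRight (φ u) (hφ u), ← Sum.inr_getRight (φ w) (hφ w)] at h

lemma exists_isLeft_of_colorable_lt_chromaticNumber {k : ℕ} (φ : F →g joinGraph G H)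
    (hH : H.Colorable k) {S : Set W} (hS : k < (F.induce S).chromaticNumber) :
    ∃ w ∈ S, (φ w).isLeft := by
  by_contra! hright
  refine hS.not_ge (Colorable.chromaticNumber_le ?_)
  exact colorable_of_forall_isRight (φ.comp (Embedding.induce S).toHom)
    (fun w => Sum.not_isLeft.mp (hright w w.2)) hH

end joinGraph

lemma card_le_of_forall_exists_isLeft {ι W γ α β : Type*} [Fintype ι] [Fintype α]
    (f : W ↪ α ⊕ β) (c : W → γ) {e : ι → γ} (he : Function.Injective e)
    (h : ∀ i, ∃ w, c w = e i ∧ (f w).isLeft) : Fintype.card ι ≤ Fintype.card α := by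
  choose w hw hleft using h
  refine Fintype.card_le_of_injective (fun i => (f (w i)).getLeft (hleft i)) fun i j hij => ?_
  have hf : f (w i) = f (w j) := by
    rw [← Sum.inl_getLeft _ (hleft i), ← Sum.inl_getLeft _ (hleft j)]
    exact congrArg Sum.inl hij
  exact he (by rw [← hw i, ← hw j, f.injective hf])

theorem stmt_16_general {V κ : Type*} (F : SimpleGraph V) (r s : ℕ)
    (hr : 1 ≤ r) (hs : 1 ≤ s)
    (comp : V → Fin s ⊕ κ)
    (hbig : ∀ i : Fin s,
      (F.induce {v | comp v = Sum.inl i}).chromaticNumber = (r + 1 : ℕ) ∧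
      ∃ u v : V, comp u = Sum.inl i ∧ comp v = Sum.inl i ∧ F.Adj u v ∧
        ((F.deleteEdges {s(u, v)}).induce
            {w | comp w = Sum.inl i}).chromaticNumber ≤ (r : ℕ)) :
    ∃ N : ℕ, ∀ n ≥ N,
      ¬ Contains F (joinGraph (⊤ : SimpleGraph (Fin (s - 1)))
          (turanGraph (n - s + 1) r)) := by
  refine ⟨0, fun n _ ⟨f, hf⟩ => ?_⟩
  have hapex (i : Fin s) : ∃ v, comp v = Sum.inl i ∧ (f v).isLeft :=
    exists_isLeft_of_colorable_lt_chromaticNumber ⟨f, hf _ _⟩ (turanGraph_colorable hr)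
      (S := {v | comp v = Sum.inl i}) (by rw [(hbig i).1]; exact_mod_cast Nat.lt_succ_self r)
  have hcard := card_le_of_forall_exists_isLeft f comp Sum.inl_injective hapex
  rw [Fintype.card_fin, Fintype.card_fin] at hcard
  omega

/-- If `F` is a disjoint union of `s` pieces of chromatic number `r+1`, each with a
color-critical edge, together with pieces of chromatic number at most `r`, then
`K_{s-1} + T(n-s+1, r)` is `F`-free for all sufficiently large `n`. -/
theorem stmt_16 {V κ : Type*} [Fintype V] (F : SimpleGraph V) (r s : ℕ)
    (hr : 1 ≤ r) (hs : 1 ≤ s)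
    (comp : V → Fin s ⊕ κ)
    (hcomp : ∀ u v, F.Adj u v → comp u = comp v)
    (hbig : ∀ i : Fin s,
      (F.induce {v | comp v = Sum.inl i}).chromaticNumber = (r + 1 : ℕ) ∧
      ∃ u v : V, comp u = Sum.inl i ∧ comp v = Sum.inl i ∧ F.Adj u v ∧
        ((F.deleteEdges {s(u, v)}).induce
            {w | comp w = Sum.inl i}).chromaticNumber ≤ (r : ℕ))
    (hsmall : ∀ j : κ,
      (F.induce {v | comp v = Sum.inr j}).chromaticNumber ≤ (r : ℕ)) :
    ∃ N : ℕ, ∀ n ≥ N,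
      ¬ Contains F (joinGraph (⊤ : SimpleGraph (Fin (s - 1)))
          (turanGraph (n - s + 1) r)) :=
  stmt_16_general F r s hr hs comp hbig
end

section
/- If G is a graph with n vertices in which every vertex has degree less than ε·n in its own part A_i of an r-partition and is adjacent to at least |A_j| − δ·n vertices of every other part A_j, and u, v lie in parts so that they have at least c·n common neighbors outside B in each of k−2 specified parts (with all parts of size at least n/(2r), and c > (k−2)δ), then u and v together with k−2 greedily chosen common neighbors, one from each of the k−2 parts, form a k-clique, provided n is large enough that c·n − (k−2)·δ·n > 0. -/
/-! Choose the vertices one part at a time. Each vertex chosen so far is non-adjacent to at most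
`δ·n` vertices of the next part, so fewer than `m·δ·n < c·n` of the common neighbours of `u` and
`v` in that part are excluded, and one of the remaining ones can be added. -/

open Finset

namespace SimpleGraph

variable {V : Type*} (G : SimpleGraph V) [DecidableRel G.Adj]

theorem exists_mem_forall_adj_of_card_mul_lt {S T : Finset V} {d : ℕ}
    (hT : ∀ y ∈ T, #{x ∈ S | ¬ G.Adj y x} ≤ d) (hS : #T * d < #S) :
    ∃ w ∈ S, ∀ y ∈ T, G.Adj y w := by
  classical
  by_contra! h
  have hcover : S ⊆ T.biUnion fun y => {x ∈ S | ¬ G.Adj y x} := by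
    intro w hw
    obtain ⟨y, hy, hyw⟩ := h w hw
    exact mem_biUnion.2 ⟨y, hy, mem_filter.2 ⟨hw, hyw⟩⟩
  exact ((card_le_card hcover).trans (card_biUnion_le_card_mul _ _ _ hT)).not_gt hS

theorem exists_pairwise_adj_transversal [Nonempty V] {ι : Type*} (S : ι → Finset V) (s : Finset ι) (d : ℕ)
    (hmiss : ∀ j ∈ s, ∀ w ∈ S j, ∀ i ∈ s, #{x ∈ S i | ¬ G.Adj w x} ≤ d)
    (hsize : ∀ i ∈ s, (#s - 1) * d < #(S i)) :
    ∃ x : ι → V, (∀ i ∈ s, x i ∈ S i) ∧ (s : Set ι).Pairwise fun i j => G.Adj (x i) (x j) := by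
  classical
  induction s using Finset.induction_on with
  | empty => exact ⟨fun _ => Classical.arbitrary _, by simp, by simp⟩
  | insert a t ha ih =>
    have hcard : #(insert a t) - 1 = #t := by rw [card_insert_of_notMem ha, Nat.add_sub_cancel]
    obtain ⟨x, hxS, hxadj⟩ := ih
      (fun j hj w hw i hi => hmiss j (mem_insert_of_mem hj) w hw i (mem_insert_of_mem hi))
      (fun i hi => (Nat.mul_le_mul_right d (by omega)).trans_lt (hsize i (mem_insert_of_mem hi)))
    have hT : ∀ y ∈ t.image x, #{z ∈ S a | ¬ G.Adj y z} ≤ d := by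
      intro y hy
      obtain ⟨j, hj, rfl⟩ := mem_image.1 hy
      exact hmiss j (mem_insert_of_mem hj) _ (hxS j hj) a (mem_insert_self a t)
    obtain ⟨w, hwS, hwadj⟩ := G.exists_mem_forall_adj_of_card_mul_lt hT
      ((Nat.mul_le_mul_right d card_image_le).trans_lt (hcard ▸ hsize a (mem_insert_self a t)))
    have hx : ∀ i ∈ t, Function.update x a w i = x i :=
      fun i hi => Function.update_of_ne (ne_of_mem_of_not_mem hi ha) _ _
    refine ⟨Function.update x a w, ?_, ?_⟩
    · intro i hi
      rcases mem_insert.1 hi with rfl | hi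
      · simpa using hwS
      · exact hx i hi ▸ hxS i hi
    · rw [coe_insert, Set.pairwise_insert]
      refine ⟨fun i hi j hj hij => ?_, fun b hb _ => ?_⟩
      · dsimp only
        rw [hx i hi, hx j hj]
        exact hxadj hi hj hij
      · rw [Function.update_self, hx b hb]
        have hbw := hwadj (x b) (mem_image_of_mem x hb)
        exact ⟨hbw.symm, hbw⟩

end SimpleGraph

theorem stmt_17_general {V : Type*}
    (G : SimpleGraph V) [DecidableRel G.Adj] (u v : V)
    (m : ℕ) (A : Fin m → Finset V) (n : ℕ) (hn : 0 < n) (c δ : ℝ) (hδ : 0 ≤ δ)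
    (hc : (m : ℝ) * δ < c)
    (hsize : ∀ i, c * n ≤ (((A i).filter (fun x => G.Adj u x ∧ G.Adj v x)).card : ℝ))
    (hmiss : ∀ j : Fin m, ∀ w ∈ A j, ∀ i : Fin m,
      (((A i).filter (fun x => ¬ G.Adj w x)).card : ℝ) ≤ δ * n) :
    ∃ x : Fin m → V, (∀ i, x i ∈ A i) ∧
      (∀ i, G.Adj u (x i) ∧ G.Adj v (x i)) ∧
      (∀ i j, i ≠ j → G.Adj (x i) (x j)) := by
  set S : Fin m → Finset V := fun i => (A i).filter fun x => G.Adj u x ∧ G.Adj v x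
  have hmissS : ∀ j ∈ univ, ∀ w ∈ S j, ∀ i ∈ univ, #{x ∈ S i | ¬ G.Adj w x} ≤ ⌊δ * n⌋₊ :=
    fun j _ w hw i _ => Nat.le_floor <|
      (Nat.cast_le.2 (card_le_card (filter_subset_filter _ (filter_subset _ _)))).trans
        (hmiss j w (mem_filter.1 hw).1 i)
  have hsizeS : ∀ i ∈ univ, (#(univ : Finset (Fin m)) - 1) * ⌊δ * n⌋₊ < #(S i) := by
    intro i _
    have hlt : ((m * ⌊δ * n⌋₊ : ℕ) : ℝ) < #(S i) := calc
      _ ≤ m * (δ * n) := by push_cast; gcongr; exact Nat.floor_le (by positivity)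
      _ = m * δ * n := by ring
      _ < c * n := by gcongr
      _ ≤ #(S i) := hsize i
    rw [card_univ, Fintype.card_fin]
    exact (Nat.mul_le_mul_right _ (Nat.sub_le m 1)).trans_lt (by exact_mod_cast hlt)
  have : Nonempty V := ⟨u⟩
  obtain ⟨x, hxS, hxadj⟩ := G.exists_pairwise_adj_transversal S univ _ hmissS hsizeS
  have hxS' : ∀ i, x i ∈ S i := fun i => hxS i (mem_univ i)
  exact ⟨x, fun i => (mem_filter.1 (hxS' i)).1, fun i => (mem_filter.1 (hxS' i)).2,
    fun i j hij => hxadj (mem_coe.2 (mem_univ i)) (mem_coe.2 (mem_univ j)) hij⟩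

/-- Greedy clique completion: `u, v` are adjacent, each target set `A i` contains at least
`c·n` common neighbors of `u` and `v`, every vertex of every target set is non-adjacent to
at most `δ·n` vertices of each target set, and `c > m·δ`.  Then one can choose a vertex
from each target set so that together with `u` and `v` they form a clique. -/
theorem stmt_17 {V : Type*} [Fintype V] [DecidableEq V]
    (G : SimpleGraph V) [DecidableRel G.Adj] (u v : V) (huv : G.Adj u v)
    (m : ℕ) (A : Fin m → Finset V) (n : ℕ) (hn : 0 < n) (c δ : ℝ) (hδ : 0 ≤ δ)
    (hc : (m : ℝ) * δ < c)
    (hsize : ∀ i, c * n ≤ (((A i).filter (fun x => G.Adj u x ∧ G.Adj v x)).card : ℝ))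
    (hmiss : ∀ j : Fin m, ∀ w ∈ A j, ∀ i : Fin m,
      (((A i).filter (fun x => ¬ G.Adj w x)).card : ℝ) ≤ δ * n) :
    ∃ x : Fin m → V, (∀ i, x i ∈ A i) ∧
      (∀ i, G.Adj u (x i) ∧ G.Adj v (x i)) ∧
      (∀ i j, i ≠ j → G.Adj (x i) (x j)) :=
  stmt_17_general G u v m A n hn c δ hδ hc hsize hmiss
end
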